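/- Let (X,d) be a complete metric space and let (f_n) be a sequence of maps X → X such that each f_n is a contraction with contractivity factor c_n ∈ [0,1). Suppose (f_n) is Cauchy with respect to d̄∞ (for every ε > 0 there is N with d̄∞(f_n, f_m) < ε for all n, m ≥ N) and is eventually decreasing (there exists N ∈ ℕ such that c_{n+1} ≤ c_n for all n ≥ N). Then there exist c ∈ [0,1) and a map f : X → X with d(f(x),f(y)) ≤ c·d(x,y) for all x, y ∈ X, such that d̄∞(f_n, f) → 0 as n → ∞. -/

import Mathlib

noncomputable def dbar {X : Type*} [MetricSpace X] (f g : X → X) : ℝ :=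
  ⨆ x : X, dist (f x) (g x) / (1 + dist (f x) (g x))

/-!
A `dbar`-Cauchy sequence of maps is uniformly Cauchy, since `t ↦ t / (1 + t)` is an increasing
homeomorphism of `[0, ∞)` onto `[0, 1)`. Completeness of `X` gives a pointwise limit `F`, and the
uniform Cauchy bound passes to the limit, so `dbar (f n) F → 0`. The contraction inequalities of
`f n` for `n ≥ N` all hold with the single constant `c N` because the factors are eventually
decreasing, and non-strict inequalities survive pointwise limits.
-/

open Filter Topology

lemma div_one_add_le_div_one_add {a b : ℝ} (ha : 0 ≤ a) (hab : a ≤ b) :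
    a / (1 + a) ≤ b / (1 + b) := by
  rw [div_le_div_iff₀ (by linarith) (by linarith)]
  nlinarith

lemma dist_le_mul_of_tendsto {ι X Y : Type*} [PseudoMetricSpace X] [PseudoMetricSpace Y]
    {l : Filter ι} [l.NeBot] {f : ι → X → Y} {F : X → Y}
    (hF : ∀ x, Tendsto (fun n => f n x) l (𝓝 (F x))) {c : ℝ}
    (hf : ∀ᶠ n in l, ∀ x y, dist (f n x) (f n y) ≤ c * dist x y) (x y : X) :
    dist (F x) (F y) ≤ c * dist x y :=
  le_of_tendsto ((hF x).dist (hF y)) (hf.mono fun _ hn => hn x y)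

section Dbar

variable {X : Type*} [MetricSpace X]

lemma dbar_bddAbove (f g : X → X) :
    BddAbove (Set.range fun x => dist (f x) (g x) / (1 + dist (f x) (g x))) := by
  refine ⟨1, ?_⟩
  rintro _ ⟨x, rfl⟩
  have := dist_nonneg (x := f x) (y := g x)
  rw [div_le_one (by linarith)]
  linarith

lemma le_dbar (f g : X → X) (x : X) :
    dist (f x) (g x) / (1 + dist (f x) (g x)) ≤ dbar f g :=
  le_ciSup (dbar_bddAbove f g) x

lemma dbar_nonneg (f g : X → X) : 0 ≤ dbar f g :=
  Real.iSup_nonneg fun _ => by positivity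

lemma dbar_le {f g : X → X} {r : ℝ} (hr : 0 ≤ r)
    (h : ∀ x, dist (f x) (g x) / (1 + dist (f x) (g x)) ≤ r) : dbar f g ≤ r :=
  Real.iSup_le h hr

lemma dist_lt_of_dbar_lt {f g : X → X} {ε : ℝ} (hε : 0 ≤ ε) (h : dbar f g < ε / (1 + ε))
    (x : X) : dist (f x) (g x) < ε := by
  by_contra! hx
  exact (le_dbar f g x).not_gt (h.trans_le (div_one_add_le_div_one_add hε hx))

variable {f : ℕ → X → X}
  (hf : ∀ ε : ℝ, 0 < ε → ∃ N : ℕ, ∀ n ≥ N, ∀ m ≥ N, dbar (f n) (f m) < ε)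
include hf

lemma cauchySeq_apply_of_dbar (x : X) : CauchySeq fun n => f n x := by
  refine Metric.cauchySeq_iff.2 fun ε hε => ?_
  obtain ⟨N, hN⟩ := hf (ε / (1 + ε)) (by positivity)
  exact ⟨N, fun m hm n hn => dist_lt_of_dbar_lt hε.le (hN m hm n hn) x⟩

lemma tendsto_dbar_of_tendsto_apply {F : X → X}
    (hF : ∀ x, Tendsto (fun n => f n x) atTop (𝓝 (F x))) :
    Tendsto (fun n => dbar (f n) F) atTop (𝓝 0) := by
  refine Metric.tendsto_atTop.2 fun ε hε => ?_
  obtain ⟨N, hN⟩ := hf (ε / 2) (by positivity)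
  refine ⟨N, fun n hn => ?_⟩
  have hbound : dbar (f n) F ≤ ε / 2 := by
    refine dbar_le (by positivity) fun x => ?_
    have hcont : Continuous fun y => dist (f n x) y / (1 + dist (f n x) y) :=
      (continuous_const.dist continuous_id).div (continuous_const.add
        (continuous_const.dist continuous_id)) fun y => by positivity
    refine le_of_tendsto ((hcont.tendsto _).comp (hF x)) ?_
    filter_upwards [eventually_ge_atTop N] with m hm
    exact (le_dbar (f n) (f m) x).trans (hN n hn m hm).le
  rw [Real.dist_eq, sub_zero, abs_of_nonneg (dbar_nonneg _ _)]
  linarith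

end Dbar

theorem stmt_3 {X : Type*} [MetricSpace X] [CompleteSpace X]
    (f : ℕ → X → X) (c : ℕ → ℝ)
    (hc : ∀ n, 0 ≤ c n ∧ c n < 1)
    (hcontr : ∀ n, ∀ x y : X, dist (f n x) (f n y) ≤ c n * dist x y)
    (hCauchy : ∀ ε : ℝ, 0 < ε → ∃ N : ℕ, ∀ n ≥ N, ∀ m ≥ N, dbar (f n) (f m) < ε)
    (hdec : ∃ N : ℕ, ∀ n ≥ N, c (n+1) ≤ c n) :
    ∃ (c' : ℝ) (F : X → X), 0 ≤ c' ∧ c' < 1 ∧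
      (∀ x y : X, dist (F x) (F y) ≤ c' * dist x y) ∧
      Filter.Tendsto (fun n => dbar (f n) F) Filter.atTop (nhds 0) := by
  obtain ⟨N, hN⟩ := hdec
  have hc_le : ∀ n ≥ N, c n ≤ c N := fun n hn =>
    antitoneOn_nat_Ici_of_succ_le hN (Set.mem_Ici.2 le_rfl) (Set.mem_Ici.2 hn) hn
  choose F hF using fun x => cauchySeq_tendsto_of_complete (cauchySeq_apply_of_dbar hCauchy x)
  refine ⟨c N, F, (hc N).1, (hc N).2, dist_le_mul_of_tendsto hF ?_,
    tendsto_dbar_of_tendsto_apply hCauchy hF⟩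
  filter_upwards [eventually_ge_atTop N] with n hn x y
  exact (hcontr n x y).trans (mul_le_mul_of_nonneg_right (hc_le n hn) dist_nonneg)
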